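/- Let q ∈ ℂ with q^j ≠ 1 for all integers j ≥ 1 and let z ∈ ℂ with z ≠ 0. Then for every k, l ∈ {0,1}: (i) ∑_{i,j∈{0,1}} M(z)^{k,l}_{i,j} χ(z) = χ(z) in F̂; and (ii) ∑_{i,j∈{0,1}} (φ_{1/z} ∘ M(z)^{i,j}_{k,l}) = φ_{1/z} as linear functionals on F, where φ_w(|m⟩) = (q²)_m w^m/(q)_m with (q²)_m = ∏_{j=1}^m (1 − q^{2j}). -/

import Mathlib

/-! Both identities are coordinatewise first-order recurrences. The coefficients of `χ(z)` satisfy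
`(1 - q^(m+1)) χ_(m+1) = z χ_m`, and those of `φ_w` satisfy `φ_(m+1) = (1 + q^(m+1)) w φ_m`, since
`(q²)_(m+1) / (q)_(m+1)` gains the factor `(1 - q^(2(m+1))) / (1 - q^(m+1)) = 1 + q^(m+1)`.
Every `M(z)^{a,b}_{i,j}` moves `|m⟩` by at most one step, so for `(k,l) = (0,1)` and `(1,0)` both
identities are, coordinate by coordinate, one of these recurrences; for `k = l` the sums are `1`. -/

open scoped TensorProduct
open scoped Classical

noncomputable section

/-- The Fock space: complex vector space with basis `{|m⟩ : m ∈ ℕ}`. -/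
abbrev FockSp : Type := ℕ →₀ ℂ

/-- basis vector `|m⟩` -/
def ket (m : ℕ) : FockSp := Finsupp.single m 1

/-- linear operator on the Fock space determined by its values on basis vectors -/
def opOfFun (g : ℕ → FockSp) : Module.End ℂ FockSp :=
  Finsupp.lsum ℂ fun m => LinearMap.toSpanSingleton ℂ FockSp (g m)

/-- `a⁺|m⟩ = |m+1⟩` -/
def aPlus : Module.End ℂ FockSp := opOfFun fun m => ket (m + 1)

/-- `a⁻|m⟩ = (1-q^{2m})|m-1⟩`; at `q = 0` this is `a⁻|m⟩ = |m-1⟩` with `|-1⟩ = 0` -/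
def aMinus (q : ℂ) : Module.End ℂ FockSp :=
  opOfFun fun m => (1 - q ^ (2 * m)) • ket (m - 1)

/-- `k|m⟩ = (-q)^m|m⟩`; at `q = 0` this is `k|m⟩ = δ_{m,0}|m⟩` -/
def kOp (q : ℂ) : Module.End ℂ FockSp := opOfFun fun m => (-q) ^ m • ket m

/-- `k̃|m⟩ = q^m|m⟩` -/
def ktOp (q : ℂ) : Module.End ℂ FockSp := opOfFun fun m => q ^ m • ket m

/-- numerical value of a `{0,1}`-valued edge variable (`false ↔ 0`, `true ↔ 1`) -/
def bv (b : Bool) : ℕ := cond b 1 0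

/-- The 3D `M` operator: `Mop q z a b i j` is `M(z)^{a,b}_{i,j}`. -/
def Mop (q z : ℂ) : Bool → Bool → Bool → Bool → Module.End ℂ FockSp
  | false, false, false, false => 1
  | true, true, true, true => 1
  | false, true, true, false => z • aPlus
  | true, false, false, true => z⁻¹ • aMinus q
  | false, true, false, true => ktOp q
  | true, false, true, false => (-q) • ktOp q
  | _, _, _, _ => 0

/-- the space `F̂` of formal sums `∑_{m≥0} c_m|m⟩`, represented by their coordinates -/
abbrev FHat : Type := ℕ → ℂ

/-- generic operator on `F̂` of the form `(c_m)_m ↦ (coef m · c_{idx m})_m` -/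
def genOpF (coef : ℕ → ℂ) (idx : ℕ → ℕ) : Module.End ℂ FHat where
  toFun c := fun m => coef m * c (idx m)
  map_add' a b := by funext m; simp [mul_add]
  map_smul' r a := by funext m; simp [smul_eq_mul]; ring

/-- componentwise extension of `a⁺` to `F̂`: `∑ c_m |m⟩ ↦ ∑ c_m |m+1⟩` -/
def aPlusF : Module.End ℂ FHat := genOpF (fun m => if m = 0 then 0 else 1) (fun m => m - 1)
/-- componentwise extension of `a⁻` to `F̂` -/
def aMinusF (q : ℂ) : Module.End ℂ FHat :=
  genOpF (fun m => 1 - q ^ (2 * (m + 1))) (fun m => m + 1)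
/-- componentwise extension of `k` to `F̂` -/
def kFh (q : ℂ) : Module.End ℂ FHat := genOpF (fun m => (-q) ^ m) id
/-- componentwise extension of `k̃` to `F̂` -/
def ktFh (q : ℂ) : Module.End ℂ FHat := genOpF (fun m => q ^ m) id

/-- the `M` operator extended componentwise to `F̂`: `MopF q z a b i j` is `M(z)^{a,b}_{i,j}` -/
def MopF (q z : ℂ) : Bool → Bool → Bool → Bool → Module.End ℂ FHat
  | false, false, false, false => 1
  | true, true, true, true => 1
  | false, true, true, false => z • aPlusF
  | true, false, false, true => z⁻¹ • aMinusF q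
  | false, true, false, true => ktFh q
  | true, false, true, false => (-q) • ktFh q
  | _, _, _, _ => 0

/-- `(q)_m = ∏_{j=1}^m (1 - q^j)` -/
def qPoch (q : ℂ) (m : ℕ) : ℂ := ∏ j ∈ Finset.range m, (1 - q ^ (j + 1))

/-- `χ(w) = ∑_{m≥0} (w^m/(q)_m)|m⟩ ∈ F̂` -/
def chiF (q w : ℂ) : FHat := fun m => w ^ m / qPoch q m

/-- `(q²)_m = ∏_{j=1}^m (1 - q^{2j})` -/
def qPoch2 (q : ℂ) (m : ℕ) : ℂ := ∏ j ∈ Finset.range m, (1 - q ^ (2 * (j + 1)))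

/-- linear functional on the Fock space determined by its values on basis vectors -/
def dualOf (g : ℕ → ℂ) : FockSp →ₗ[ℂ] ℂ :=
  Finsupp.lsum ℂ fun m => LinearMap.toSpanSingleton ℂ ℂ (g m)

/-- the functional `φ_w` with `φ_w(|m⟩) = (q²)_m w^m/(q)_m` -/
def phiW (q w : ℂ) : FockSp →ₗ[ℂ] ℂ := dualOf fun m => qPoch2 q m * w ^ m / qPoch q m


lemma qPoch_succ (q : ℂ) (m : ℕ) :
    qPoch q (m + 1) = qPoch q m * (1 - q ^ (m + 1)) :=
  Finset.prod_range_succ _ _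

lemma qPoch2_succ (q : ℂ) (m : ℕ) :
    qPoch2 q (m + 1) = qPoch2 q m * ((1 - q ^ (m + 1)) * (1 + q ^ (m + 1))) := by
  simp only [qPoch2, Finset.prod_range_succ]
  ring

lemma qPoch_ne_zero {q : ℂ} (hq : ∀ j : ℕ, 1 ≤ j → q ^ j ≠ 1) (m : ℕ) : qPoch q m ≠ 0 :=
  Finset.prod_ne_zero_iff.2 fun j _ => sub_ne_zero.2 (hq (j + 1) j.succ_pos).symm

lemma chiF_succ {q : ℂ} (w : ℂ) {m : ℕ} (hm : qPoch q (m + 1) ≠ 0) :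
    (1 - q ^ (m + 1)) * chiF q w (m + 1) = w * chiF q w m := by
  rw [qPoch_succ, mul_ne_zero_iff] at hm
  simp only [chiF, qPoch_succ]
  field_simp [hm.1, hm.2]
  ring

lemma aPlusF_apply (c : FHat) (m : ℕ) :
    aPlusF c m = (if m = 0 then 0 else 1) * c (m - 1) := rfl

lemma aMinusF_apply (q : ℂ) (c : FHat) (m : ℕ) :
    aMinusF q c m = (1 - q ^ (2 * (m + 1))) * c (m + 1) := rfl

lemma ktFh_apply (q : ℂ) (c : FHat) (m : ℕ) : ktFh q c m = q ^ m * c m := rfl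

lemma FockSp.hom_ext {M : Type*} [AddCommMonoid M] [Module ℂ M] {f g : FockSp →ₗ[ℂ] M}
    (h : ∀ m, f (ket m) = g (ket m)) : f = g :=
  Finsupp.lhom_ext' fun m => LinearMap.ext_ring (h m)

lemma opOfFun_ket (g : ℕ → FockSp) (m : ℕ) : opOfFun g (ket m) = g m := by
  simp [opOfFun, ket]

lemma phiW_ket (q w : ℂ) (m : ℕ) : phiW q w (ket m) = qPoch2 q m * w ^ m / qPoch q m := by
  simp [phiW, dualOf, ket]

lemma phiW_ket_succ {q : ℂ} (w : ℂ) {m : ℕ} (hm : qPoch q (m + 1) ≠ 0) :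
    phiW q w (ket (m + 1)) = (1 + q ^ (m + 1)) * w * phiW q w (ket m) := by
  rw [qPoch_succ, mul_ne_zero_iff] at hm
  simp only [phiW_ket, qPoch_succ, qPoch2_succ]
  field_simp [hm.1, hm.2]
  ring

section Eigenvectors

variable {q : ℂ} (hP : ∀ m, qPoch q m ≠ 0)
include hP

lemma sum_MopF_false_true_chiF (z : ℂ) :
    ∑ i : Bool, ∑ j : Bool, MopF q z false true i j (chiF q z) = chiF q z := by
  simp only [Fintype.sum_bool, MopF, LinearMap.zero_apply, zero_add, add_zero]
  funext m
  cases m with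
  | zero => simp [aPlusF_apply, ktFh_apply]
  | succ m =>
    simp only [Pi.add_apply, LinearMap.smul_apply, Pi.smul_apply, smul_eq_mul, aPlusF_apply,
      ktFh_apply, if_neg m.succ_ne_zero, Nat.add_sub_cancel]
    linear_combination -chiF_succ z (hP (m + 1))

lemma sum_MopF_true_false_chiF {z : ℂ} (hz : z ≠ 0) :
    ∑ i : Bool, ∑ j : Bool, MopF q z true false i j (chiF q z) = chiF q z := by
  simp only [Fintype.sum_bool, MopF, LinearMap.zero_apply, zero_add, add_zero]
  funext m
  simp only [Pi.add_apply, LinearMap.smul_apply, Pi.smul_apply, smul_eq_mul, aMinusF_apply,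
    ktFh_apply]
  -- `1 - q^(2(m+1))` factors as `(1 - q^(m+1)) (1 + q^(m+1))`
  linear_combination z⁻¹ * (1 + q ^ (m + 1)) * chiF_succ z (hP (m + 1)) +
    (1 + q ^ (m + 1)) * chiF q z m * inv_mul_cancel₀ hz

lemma sum_phiW_comp_Mop_false_true (z : ℂ) :
    ∑ i : Bool, ∑ j : Bool, phiW q z⁻¹ ∘ₗ Mop q z i j false true = phiW q z⁻¹ := by
  refine FockSp.hom_ext fun m => ?_
  simp only [Fintype.sum_bool, Mop, LinearMap.comp_zero, zero_add, add_zero,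
    LinearMap.add_apply, LinearMap.comp_apply, LinearMap.smul_apply, aMinus, ktOp,
    opOfFun_ket, map_smul, smul_eq_mul]
  cases m with
  | zero => simp
  | succ m =>
    rw [Nat.add_sub_cancel, phiW_ket_succ z⁻¹ (hP (m + 1))]
    ring

lemma sum_phiW_comp_Mop_true_false {z : ℂ} (hz : z ≠ 0) :
    ∑ i : Bool, ∑ j : Bool, phiW q z⁻¹ ∘ₗ Mop q z i j true false = phiW q z⁻¹ := by
  refine FockSp.hom_ext fun m => ?_
  simp only [Fintype.sum_bool, Mop, LinearMap.comp_zero, zero_add, add_zero,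
    LinearMap.add_apply, LinearMap.comp_apply, LinearMap.smul_apply, aPlus, ktOp,
    opOfFun_ket, map_smul, smul_eq_mul]
  rw [phiW_ket_succ z⁻¹ (hP (m + 1))]
  linear_combination (1 + q ^ (m + 1)) * phiW q z⁻¹ (ket m) * mul_inv_cancel₀ hz

end Eigenvectors

/-- (i) `∑_{i,j} M(z)^{k,l}_{i,j} χ(z) = χ(z)` in `F̂`, and
(ii) `∑_{i,j} φ_{1/z} ∘ M(z)^{i,j}_{k,l} = φ_{1/z}` as functionals on `F`. -/
theorem corollary_eigenvectors (q z : ℂ) (hq : ∀ j : ℕ, 1 ≤ j → q ^ j ≠ 1) (hz : z ≠ 0) :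
    (∀ k l : Bool,
        (∑ i : Bool, ∑ j : Bool, MopF q z k l i j (chiF q z)) = chiF q z) ∧
    (∀ k l : Bool,
        (∑ i : Bool, ∑ j : Bool, phiW q z⁻¹ ∘ₗ Mop q z i j k l) = phiW q z⁻¹) := by
  have hP := qPoch_ne_zero hq
  refine ⟨fun k l => ?_, fun k l => ?_⟩ <;> cases k <;> cases l
  · simp [MopF]
  · exact sum_MopF_false_true_chiF hP z
  · exact sum_MopF_true_false_chiF hP hz
  · simp [MopF]
  · exact FockSp.hom_ext fun m => by simp [Mop]
  · exact sum_phiW_comp_Mop_false_true hP z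
  · exact sum_phiW_comp_Mop_true_false hP hz
  · exact FockSp.hom_ext fun m => by simp [Mop]

end
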